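/- Fix m ∈ ℝ and let C₃(b₁,b₂,b₃) = (1-b₁²)b₂ - b₁²m² - b₃² on ℝ³. Consider the reduced phase space P_m = {b ∈ ℝ³ : C₃(b) = 0, b₂ ≥ 0, b₁² ≤ 1}. Then a point b ∈ P_m satisfies ∇C₃(b) = 0 if and only if m = 0 and b = (1,0,0) or b = (-1,0,0). Consequently, for m ≠ 0 the variety {C₃ = 0} contains no singular points in P_m (P_m is a smooth surface), while for m = 0 the reduced phase space P₀ has exactly two singular (conical) points, located at (±1, 0, 0). -/

import Mathlib

/-! The partial derivatives of `C₃` are `-2b₁(b₂ + m²)`, `1 - b₁²` and `-2b₃`, so the critical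
points of `C₃` are `b = (±1, -m², 0)`. Such a point lies on `{C₃ = 0}` exactly when
`C₃(±1, -m², 0) = -m²` vanishes, i.e. when `m = 0`. -/

noncomputable section

/-- `ℝ³` (`b`-space) as a Euclidean space. -/
abbrev E3 := EuclideanSpace ℝ (Fin 3)

/-- `C₃(b) = (1-b₁²)b₂ - b₁²m² - b₃²`. -/
def C3fun (m : ℝ) : E3 → ℝ := fun b =>
  (1 - (b 0) ^ 2) * b 1 - (b 0) ^ 2 * m ^ 2 - (b 2) ^ 2

theorem EuclideanSpace.gradient_apply {ι : Type*} [Fintype ι] [DecidableEq ι]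
    (f : EuclideanSpace ℝ ι → ℝ) (x : EuclideanSpace ℝ ι) (i : ι) :
    gradient f x i = fderiv ℝ f x (EuclideanSpace.single i 1) := by
  rw [← InnerProductSpace.toDual_symm_apply, real_inner_comm,
    EuclideanSpace.inner_single_left, map_one, one_mul]
  rfl

theorem gradient_C3fun (m : ℝ) (b : E3) :
    gradient (C3fun m) b = !₂[-2 * b 0 * (b 1 + m ^ 2), 1 - b 0 ^ 2, -2 * b 2] := by
  have hcoord (i : Fin 3) :
      HasFDerivAt (fun b : E3 => b i) (EuclideanSpace.proj i : E3 →L[ℝ] ℝ) b :=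
    (EuclideanSpace.proj i : E3 →L[ℝ] ℝ).hasFDerivAt
  have hC : HasFDerivAt (C3fun m) _ b :=
    ((((hcoord 0).pow 2).const_sub 1).fun_mul (hcoord 1)).fun_sub
      (((hcoord 0).pow 2).mul_const (m ^ 2)) |>.fun_sub ((hcoord 2).pow 2)
  ext i
  rw [EuclideanSpace.gradient_apply, hC.fderiv]
  fin_cases i
  · simp
    ring
  all_goals simp

theorem gradient_C3fun_eq_zero_iff (m : ℝ) (b : E3) :
    gradient (C3fun m) b = 0 ↔ (b 0 = 1 ∨ b 0 = -1) ∧ b 1 = -m ^ 2 ∧ b 2 = 0 := by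
  rw [gradient_C3fun, ← WithLp.ofLp_eq_zero, funext_iff, Fin.forall_fin_succ]
  simp only [Fin.isValue, neg_mul, Matrix.cons_val_zero, Pi.zero_apply, neg_eq_zero, mul_eq_zero,
    OfNat.ofNat_ne_zero, false_or, Matrix.cons_val_succ, Fin.forall_fin_two, Matrix.cons_val_one,
    Matrix.cons_val_fin_one]
  constructor
  · rintro ⟨hb0 | hb1, hsq, hb2⟩
    · simp [hb0] at hsq
    · exact ⟨sq_eq_one_iff.mp (by linarith), by linarith, hb2⟩
  · rintro ⟨hb0, hb1, hb2⟩
    exact ⟨Or.inr (by linarith), by rw [sq_eq_one_iff.mpr hb0]; ring, hb2⟩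

theorem singular_points_of_Pm_general (m : ℝ) (b : E3)
    (hC : C3fun m b = 0) :
    gradient (C3fun m) b = 0 ↔
      (m = 0 ∧ ((b 0 = 1 ∧ b 1 = 0 ∧ b 2 = 0) ∨ (b 0 = -1 ∧ b 1 = 0 ∧ b 2 = 0))) := by
  rw [gradient_C3fun_eq_zero_iff]
  constructor
  · rintro ⟨hb0, hb1, hb2⟩
    have hm : m = 0 := by
      simpa [C3fun, sq_eq_one_iff.mpr hb0, hb2] using hC
    have hb1' : b 1 = 0 := by simpa [hm] using hb1
    tauto
  · rintro ⟨rfl, ⟨h0, h1, h2⟩ | ⟨h0, h1, h2⟩⟩ <;> simp [h0, h1, h2]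

/-- A point of the reduced phase space `P_m = {C₃ = 0, b₂ ≥ 0, b₁² ≤ 1}` has
`∇C₃(b) = 0` iff `m = 0` and `b = (±1, 0, 0)`: for `m ≠ 0` the variety `{C₃ = 0}`
has no singular points in `P_m`, while `P₀` has exactly the two conical singular
points `(±1,0,0)`. -/
theorem singular_points_of_Pm (m : ℝ) (b : E3)
    (hC : C3fun m b = 0) (hb2 : 0 ≤ b 1) (hb1 : (b 0) ^ 2 ≤ 1) :
    gradient (C3fun m) b = 0 ↔
      (m = 0 ∧ ((b 0 = 1 ∧ b 1 = 0 ∧ b 2 = 0) ∨ (b 0 = -1 ∧ b 1 = 0 ∧ b 2 = 0))) :=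
  singular_points_of_Pm_general m b hC
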